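/- arXiv:1310.2347 — 2 statements merged into one kernel-verified Lean document; each statement's English description precedes it below -/
import Mathlib

section
/- Suppose lim_{t→∞} ‖σ(t)‖_F² · log t = L. If L ∈ [0,∞), then for every h > 0, lim_{n→∞} (∫_{nh}^{(n+1)h} ‖σ(s)‖_F² ds) · log n = hL; and if L = +∞, then for every h > 0, lim_{n→∞} (∫_{nh}^{(n+1)h} ‖σ(s)‖_F² ds) · log n = +∞. -/
open MeasureTheory Filter

/-- The squared Frobenius norm of `σ(s)`. -/
noncomputable def F2 {d r : ℕ} (σ : ℝ → Matrix (Fin d) (Fin r) ℝ) (s : ℝ) : ℝ :=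
  ∑ i : Fin d, ∑ j : Fin r, (σ s i j) ^ 2

/-- `θ_h(n)² = ∫_{nh}^{(n+1)h} ‖σ(s)‖_F² ds`. -/
noncomputable def theta2 {d r : ℕ} (σ : ℝ → Matrix (Fin d) (Fin r) ℝ) (h : ℝ) (n : ℕ) : ℝ :=
  ∫ s in ((n : ℝ) * h)..(((n : ℝ) + 1) * h), F2 σ s

/-- The `n`-th summand of `S_h'(ε)`, taken to be `0` when `θ_h(n) = 0`. -/
noncomputable def Sterm {d r : ℕ} (σ : ℝ → Matrix (Fin d) (Fin r) ℝ) (h ε : ℝ) (n : ℕ) : ℝ :=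
  if theta2 σ h n = 0 then 0
  else Real.sqrt (theta2 σ h n) * Real.exp (-(ε ^ 2) / (2 * theta2 σ h n))

/-- `S_h'(ε) = ∑_{n=1}^∞ θ_h(n) exp(-ε²/(2θ_h(n)²)) < +∞`.
Since all summands are nonnegative, finiteness is expressed as summability. -/
def SFinite {d r : ℕ} (σ : ℝ → Matrix (Fin d) (Fin r) ℝ) (h ε : ℝ) : Prop :=
  Summable fun n : ℕ => Sterm σ h ε (n + 1)

section aux
variable {d r : ℕ}

lemma F2_nonneg (σ : ℝ → Matrix (Fin d) (Fin r) ℝ) (s : ℝ) : 0 ≤ F2 σ s :=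
  Finset.sum_nonneg fun _ _ => Finset.sum_nonneg fun _ _ => sq_nonneg _

lemma F2_contOn (σ : ℝ → Matrix (Fin d) (Fin r) ℝ) (hσ : ContinuousOn σ (Set.Ici 0)) :
    ContinuousOn (F2 σ) (Set.Ici 0) := by
  show ContinuousOn (fun s => ∑ i : Fin d, ∑ j : Fin r, (σ s i j) ^ 2) _
  apply continuousOn_finset_sum; intro i _
  apply continuousOn_finset_sum; intro j _
  exact (((continuous_apply j).comp (continuous_apply i)).comp_continuousOn hσ).pow 2

lemma F2_intInt (σ : ℝ → Matrix (Fin d) (Fin r) ℝ) (hσ : ContinuousOn σ (Set.Ici 0))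
    {h : ℝ} (hh : 0 < h) (n : ℕ) :
    IntervalIntegrable (F2 σ) volume ((n:ℝ)*h) (((n:ℝ)+1)*h) := by
  have h0 : (0:ℝ) ≤ (n:ℝ)*h := by positivity
  have hab : (n:ℝ)*h ≤ ((n:ℝ)+1)*h := by nlinarith
  refine ContinuousOn.intervalIntegrable ?_
  apply (F2_contOn σ hσ).mono
  rw [Set.uIcc_of_le hab]
  exact fun x hx => le_trans h0 hx.1

lemma part1 (σ : ℝ → Matrix (Fin d) (Fin r) ℝ) (hσ : ContinuousOn σ (Set.Ici 0))
    (L : ℝ) (hL : 0 ≤ L)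
    (hg : Tendsto (fun t : ℝ => F2 σ t * Real.log t) atTop (nhds L))
    (h : ℝ) (hh : 0 < h) :
    Tendsto (fun n : ℕ => theta2 σ h n * Real.log n) atTop (nhds (h * L)) := by
  rw [Metric.tendsto_atTop]
  intro ε' hε'
  set ε := ε' / (4 * h) with hεdef
  have hε : 0 < ε := by positivity
  have hT0 : ∀ᶠ t in atTop, dist (F2 σ t * Real.log t) L < ε :=
    Metric.tendsto_nhds.mp hg ε hε
  obtain ⟨T, hT⟩ := eventually_atTop.mp hT0
  have hln : Tendsto (fun n : ℕ => Real.log n) atTop atTop :=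
    Real.tendsto_log_atTop.comp tendsto_natCast_atTop_atTop
  have hmul : Tendsto (fun n : ℕ => (n:ℝ) * h) atTop atTop :=
    tendsto_natCast_atTop_atTop.atTop_mul_const hh
  have key : ∀ᶠ n : ℕ in atTop, dist (theta2 σ h n * Real.log n) (h * L) < ε' := by
    filter_upwards [hmul.eventually_ge_atTop T,
      hln.eventually_ge_atTop (-2 * Real.log h),
      hln.eventually_ge_atTop (2 * L * (|Real.log h| + 1) / ε),
      hln.eventually_ge_atTop 1,
      eventually_ge_atTop 1] with n h1 h2 h3 h4 h5
    set a := (n:ℝ) * h with ha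
    set b := ((n:ℝ) + 1) * h with hb
    set ln := Real.log n with hlndef
    have hn1 : (1:ℝ) ≤ (n:ℝ) := by exact_mod_cast h5
    have hnpos : (0:ℝ) < n := by linarith
    have ha0 : 0 < a := by rw [ha]; positivity
    have hab : a ≤ b := by rw [ha, hb]; nlinarith
    have hloga : Real.log a = ln + Real.log h := Real.log_mul hnpos.ne' hh.ne'
    have hlogb : Real.log b = Real.log ((n:ℝ) + 1) + Real.log h :=
      Real.log_mul (by positivity) hh.ne'
    have hlog_n1 : Real.log ((n:ℝ) + 1) ≤ ln + 1 := by
      have h1n : (0:ℝ) < ((n:ℝ) + 1) / n := by positivity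
      have := Real.log_le_sub_one_of_pos h1n
      rw [Real.log_div (by positivity) hnpos.ne'] at this
      have h2n : ((n:ℝ) + 1) / n - 1 ≤ 1 := by
        rw [div_sub_one hnpos.ne']
        rw [div_le_one hnpos]; linarith
      linarith
    have hpt : ∀ s ∈ Set.uIoc a b, ‖F2 σ s * ln - L‖ ≤ 3 * ε := by
      rw [Set.uIoc_of_le hab]
      rintro s ⟨hs1, hs2⟩
      have hspos : 0 < s := lt_trans ha0 hs1
      have hgs : |F2 σ s * Real.log s - L| < ε := by
        have := hT s (le_trans h1 hs1.le)
        rwa [Real.dist_eq] at this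
      have hls_lb : Real.log a ≤ Real.log s := Real.log_le_log ha0 hs1.le
      have hls_half : ln / 2 ≤ Real.log s := by
        rw [hloga] at hls_lb; linarith
      have hls_pos : 0 < Real.log s := by linarith
      have hls_ub : Real.log s ≤ ln + 1 + |Real.log h| := by
        have : Real.log s ≤ Real.log b := Real.log_le_log hspos hs2
        rw [hlogb] at this
        have := le_abs_self (Real.log h)
        linarith
      set ls := Real.log s
      set u := F2 σ s with hu
      have hdecomp : u * ln - L = (u * ls - L) * (ln / ls) + L * ((ln - ls) / ls) := by
        field_simp
        ring
      have hratio : ln / ls ≤ 2 := by rw [div_le_iff₀ hls_pos]; linarith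
      have hratio0 : 0 ≤ ln / ls := by positivity
      have habs : |ln - ls| ≤ |Real.log h| + 1 := by
        rw [abs_le]
        constructor
        · -- -(|log h|+1) ≤ ln - ls : ls ≤ ln + 1 + |log h|
          linarith
        · -- ln - ls ≤ |log h| + 1 : ls ≥ ln/2 ≥ ln + log h ... use ls ≥ ln + log h
          have : ln + Real.log h ≤ ls := by rw [hloga] at hls_lb; linarith
          have := neg_abs_le (Real.log h)
          linarith
      have hterm2 : L * (|ln - ls| / ls) ≤ ε := by
        have h3' : 2 * L * (|Real.log h| + 1) ≤ ε * ln := by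
          rw [div_le_iff₀ hε] at h3; linarith
        rw [mul_div_assoc'] at *
        rw [div_le_iff₀ hls_pos]
        have hnum : L * |ln - ls| ≤ L * (|Real.log h| + 1) :=
          mul_le_mul_of_nonneg_left habs hL
        nlinarith
      rw [Real.norm_eq_abs, hdecomp]
      calc |(u * ls - L) * (ln / ls) + L * ((ln - ls) / ls)|
          ≤ |(u * ls - L) * (ln / ls)| + |L * ((ln - ls) / ls)| := abs_add_le _ _
        _ ≤ ε * 2 + ε := by
            gcongr
            · rw [abs_mul, abs_of_nonneg hratio0]
              exact mul_le_mul hgs.le hratio hratio0 hε.le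
            · rw [abs_mul, abs_div, abs_of_nonneg hL, abs_of_pos hls_pos]
              exact hterm2
        _ = 3 * ε := by ring
    have hInt := F2_intInt σ hσ hh n
    have hbound : ‖∫ s in a..b, (F2 σ s * ln - L)‖ ≤ 3 * ε * |b - a| :=
      intervalIntegral.norm_integral_le_of_norm_le_const hpt
    have hEq : ∫ s in a..b, (F2 σ s * ln - L) = theta2 σ h n * ln - h * L := by
      rw [intervalIntegral.integral_sub (hInt.mul_const ln) intervalIntegrable_const,
        intervalIntegral.integral_mul_const, intervalIntegral.integral_const]
      simp only [smul_eq_mul, theta2, ha, hb]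
      ring
    have hba : |b - a| = h := by
      rw [ha, hb]
      rw [show ((n:ℝ) + 1) * h - (n:ℝ) * h = h by ring, abs_of_pos hh]
    rw [hEq, Real.norm_eq_abs, hba] at hbound
    rw [Real.dist_eq]
    have : 3 * ε * h = 3 / 4 * ε' := by
      rw [hεdef]; field_simp
    linarith
  obtain ⟨N, hN⟩ := eventually_atTop.mp key
  exact ⟨N, hN⟩


lemma part2 (σ : ℝ → Matrix (Fin d) (Fin r) ℝ) (hσ : ContinuousOn σ (Set.Ici 0))
    (hg : Tendsto (fun t : ℝ => F2 σ t * Real.log t) atTop atTop)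
    (h : ℝ) (hh : 0 < h) :
    Tendsto (fun n : ℕ => theta2 σ h n * Real.log n) atTop atTop := by
  rw [tendsto_atTop]
  intro M
  set B := max (2 * M / h) 0 with hBdef
  have hB0 : 0 ≤ B := le_max_right _ _
  obtain ⟨T, hT⟩ := eventually_atTop.mp (hg.eventually_ge_atTop B)
  have hln : Tendsto (fun n : ℕ => Real.log n) atTop atTop :=
    Real.tendsto_log_atTop.comp tendsto_natCast_atTop_atTop
  have hmul : Tendsto (fun n : ℕ => (n:ℝ) * h) atTop atTop :=
    tendsto_natCast_atTop_atTop.atTop_mul_const hh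
  filter_upwards [hmul.eventually_ge_atTop T,
    hln.eventually_ge_atTop (1 + Real.log h),
    hln.eventually_ge_atTop (1 - Real.log h),
    hln.eventually_ge_atTop 1,
    eventually_ge_atTop 1] with n h1 h2 h2' h4 h5
  set a := (n:ℝ) * h with ha
  set b := ((n:ℝ) + 1) * h with hb
  set ln := Real.log n with hlndef
  have hn1 : (1:ℝ) ≤ (n:ℝ) := by exact_mod_cast h5
  have hnpos : (0:ℝ) < n := by linarith
  have ha0 : 0 < a := by rw [ha]; positivity
  have hab : a ≤ b := by rw [ha, hb]; nlinarith
  have hln_pos : 0 < ln := by linarith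
  have hloga : Real.log a = ln + Real.log h := Real.log_mul hnpos.ne' hh.ne'
  have hlogb : Real.log b = Real.log ((n:ℝ) + 1) + Real.log h :=
    Real.log_mul (by positivity) hh.ne'
  have hlog_n1 : Real.log ((n:ℝ) + 1) ≤ ln + 1 := by
    have h1n : (0:ℝ) < ((n:ℝ) + 1) / n := by positivity
    have := Real.log_le_sub_one_of_pos h1n
    rw [Real.log_div (by positivity) hnpos.ne'] at this
    have h2n : ((n:ℝ) + 1) / n - 1 ≤ 1 := by
      rw [div_sub_one hnpos.ne', div_le_one hnpos]; linarith
    linarith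
  have hpt : ∀ s ∈ Set.Icc a b, B / (2 * ln) ≤ F2 σ s := by
    rintro s ⟨hs1, hs2⟩
    have hspos : 0 < s := lt_of_lt_of_le ha0 hs1
    have hgs : B ≤ F2 σ s * Real.log s := hT s (le_trans h1 hs1)
    have hls_lb : Real.log a ≤ Real.log s := Real.log_le_log ha0 hs1
    have hls_pos : 0 < Real.log s := by rw [hloga] at hls_lb; linarith
    have hls_ub : Real.log s ≤ 2 * ln := by
      have : Real.log s ≤ Real.log b := Real.log_le_log hspos hs2
      rw [hlogb] at this
      linarith
    have step1 : B / Real.log s ≤ F2 σ s := by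
      rw [div_le_iff₀ hls_pos]
      linarith
    have step2 : B / (2 * ln) ≤ B / Real.log s := by
      gcongr
    linarith
  have hInt := F2_intInt σ hσ hh n
  have hmono := intervalIntegral.integral_mono_on hab intervalIntegrable_const hInt hpt
  rw [intervalIntegral.integral_const, smul_eq_mul] at hmono
  have hba : b - a = h := by rw [ha, hb]; ring
  rw [hba] at hmono
  -- hmono : h * (B / (2 * ln)) ≤ theta2 σ h n  (up to defeq of theta2)
  have htheta : h * (B / (2 * ln)) ≤ theta2 σ h n := hmono
  have h1' : h * (B / (2 * ln)) * ln = h * B / 2 := by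
    field_simp
  have hfin : h * B / 2 ≤ theta2 σ h n * ln := by
    rw [← h1']
    exact mul_le_mul_of_nonneg_right htheta hln_pos.le
  have hMB : M ≤ h * B / 2 := by
    have : 2 * M / h ≤ B := le_max_left _ _
    rw [div_le_iff₀ hh] at this
    linarith
  linarith


end aux

theorem stmt_13 (d r : ℕ) (hd : 1 ≤ d) (hr : 1 ≤ r)
    (σ : ℝ → Matrix (Fin d) (Fin r) ℝ) (hσ : ContinuousOn σ (Set.Ici 0)) :
    (∀ L : ℝ, 0 ≤ L →
      Tendsto (fun t : ℝ => F2 σ t * Real.log t) atTop (nhds L) →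
      ∀ h : ℝ, 0 < h →
        Tendsto (fun n : ℕ => theta2 σ h n * Real.log n) atTop (nhds (h * L))) ∧
    (Tendsto (fun t : ℝ => F2 σ t * Real.log t) atTop atTop →
      ∀ h : ℝ, 0 < h →
        Tendsto (fun n : ℕ => theta2 σ h n * Real.log n) atTop atTop) := by
  refine ⟨fun L hL hg h hh => part1 σ hσ L hL hg h hh,
    fun hg h hh => part2 σ hσ hg h hh⟩
end

section
/- Let h > 0 and suppose the sequence n ↦ ∫_{nh}^{(n+1)h} ‖σ(s)‖_F² ds is non-increasing. Then lim_{n→∞} (∫_{nh}^{(n+1)h} ‖σ(s)‖_F² ds) · log n = 0 if and only if S_h'(ε) < +∞ for all ε > 0. -/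
open MeasureTheory Filter

lemma theta2_nonneg {d r : ℕ} (σ : ℝ → Matrix (Fin d) (Fin r) ℝ) (h : ℝ) (hh : 0 < h)
    (n : ℕ) : 0 ≤ theta2 σ h n := by
  apply intervalIntegral.integral_nonneg
  · nlinarith [Nat.cast_nonneg (α := ℝ) n]
  · intro x _
    unfold F2
    positivity

lemma Sterm_nonneg {d r : ℕ} (σ : ℝ → Matrix (Fin d) (Fin r) ℝ) (h ε : ℝ) (n : ℕ) :
    0 ≤ Sterm σ h ε n := by
  rw [Sterm]
  split
  · exact le_refl 0
  · positivity

theorem stmt_16 (d r : ℕ) (hd : 1 ≤ d) (hr : 1 ≤ r)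
    (σ : ℝ → Matrix (Fin d) (Fin r) ℝ) (hσ : ContinuousOn σ (Set.Ici 0))
    (h : ℝ) (hh : 0 < h)
    (hmono : ∀ n : ℕ, theta2 σ h (n + 1) ≤ theta2 σ h n) :
    Tendsto (fun n : ℕ => theta2 σ h n * Real.log n) atTop (nhds 0) ↔
      (∀ ε : ℝ, 0 < ε → SFinite σ h ε) := by
  have hnn : ∀ n, 0 ≤ theta2 σ h n := theta2_nonneg σ h hh
  have hanti : Antitone (theta2 σ h) := antitone_nat_of_succ_le hmono
  set a := theta2 σ h with ha
  constructor
  · -- forward direction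
    intro hlim ε hε
    obtain ⟨N, hN⟩ := Metric.tendsto_atTop.mp hlim (ε ^ 2 / 6) (by positivity)
    show Summable fun n : ℕ => Sterm σ h ε (n + 1)
    rw [← summable_nat_add_iff (N + 2)]
    have key : ∀ n : ℕ, Sterm σ h ε (n + (N + 2) + 1) ≤
        Real.sqrt (a 0) * (1 / ((n : ℝ) + 1) ^ 3) := by
      intro n
      set m := n + (N + 2) + 1 with hm
      have hm2 : 2 ≤ m := by omega
      have hmR : (2 : ℝ) ≤ (m : ℝ) := by exact_mod_cast hm2
      have hlog : 0 < Real.log m := Real.log_pos (by linarith)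
      have hb : a m * Real.log m < ε ^ 2 / 6 := by
        have hdist := hN m (by omega)
        rw [Real.dist_eq, sub_zero] at hdist
        calc a m * Real.log m ≤ |a m * Real.log m| := le_abs_self _
          _ < _ := hdist
      rw [Sterm]
      by_cases h0 : a m = 0
      · rw [if_pos h0]; positivity
      · rw [if_neg h0]
        have hpos : 0 < a m := lt_of_le_of_ne (hnn m) (Ne.symm h0)
        have hexp : Real.exp (-(ε ^ 2) / (2 * a m)) ≤ 1 / ((m : ℝ)) ^ 3 := by
          have hstep : Real.exp (-(ε ^ 2) / (2 * a m)) ≤ ((m : ℝ)) ^ (-(3 : ℝ)) := by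
            rw [Real.rpow_def_of_pos (by linarith)]
            apply Real.exp_le_exp.mpr
            rw [div_le_iff₀ (by positivity : (0 : ℝ) < 2 * a m)]
            nlinarith
          have heq : ((m : ℝ)) ^ (-(3 : ℝ)) = 1 / ((m : ℝ)) ^ 3 := by
            rw [Real.rpow_neg (by positivity), one_div,
              show (3 : ℝ) = ((3 : ℕ) : ℝ) by norm_num, Real.rpow_natCast]
          linarith [heq ▸ hstep]
        have hsq : Real.sqrt (a m) ≤ Real.sqrt (a 0) :=
          Real.sqrt_le_sqrt (hanti (Nat.zero_le m))
        have hmn : ((n : ℝ) + 1) ≤ (m : ℝ) := by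
          have : n + 1 ≤ m := by omega
          exact_mod_cast this
        have hcube : 1 / ((m : ℝ)) ^ 3 ≤ 1 / ((n : ℝ) + 1) ^ 3 := by
          apply one_div_le_one_div_of_le (by positivity)
          exact pow_le_pow_left₀ (by positivity) hmn 3
        calc Real.sqrt (a m) * Real.exp (-(ε ^ 2) / (2 * a m))
            ≤ Real.sqrt (a 0) * (1 / ((m : ℝ)) ^ 3) := by
              apply mul_le_mul hsq hexp (Real.exp_pos _).le (Real.sqrt_nonneg _)
          _ ≤ Real.sqrt (a 0) * (1 / ((n : ℝ) + 1) ^ 3) := by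
              apply mul_le_mul_of_nonneg_left hcube (Real.sqrt_nonneg _)
    apply Summable.of_nonneg_of_le (fun n => Sterm_nonneg σ h ε _) key
    apply Summable.mul_left
    have hsum3 : Summable (fun n : ℕ => 1 / ((n : ℝ)) ^ 3) :=
      Real.summable_one_div_nat_pow.mpr (by norm_num)
    have := (summable_nat_add_iff 1).mpr hsum3
    apply this.congr
    intro n
    push_cast
    ring
  · -- reverse direction
    intro hsum
    rw [Metric.tendsto_atTop]
    intro c hc
    by_contra hcon
    push_neg at hcon
    have hfreq : ∀ N : ℕ, ∃ n, N ≤ n ∧ c ≤ a n * Real.log n := by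
      intro N
      obtain ⟨n, hn, hd'⟩ := hcon (max N 2)
      refine ⟨n, le_trans (le_max_left _ _) hn, ?_⟩
      have hn2 : 2 ≤ n := le_trans (le_max_right _ _) hn
      have hlogn : (0 : ℝ) ≤ Real.log n := by
        apply Real.log_nonneg
        exact_mod_cast Nat.one_le_of_lt hn2
      rw [Real.dist_eq, sub_zero, abs_of_nonneg (mul_nonneg (hnn n) hlogn)] at hd'
      exact hd'
    set ε := Real.sqrt c with hεdef
    have hε2 : ε ^ 2 = c := Real.sq_sqrt hc.le
    have hεpos : 0 < ε := Real.sqrt_pos.mpr hc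
    have hS : Summable fun n : ℕ => Sterm σ h ε (n + 1) := hsum ε hεpos
    set T := ∑' n : ℕ, Sterm σ h ε (n + 1) with hT
    have hT0 : 0 ≤ T := tsum_nonneg fun n => Sterm_nonneg σ h ε _
    set K := Real.sqrt 2 * (T + 1) / Real.sqrt c with hK
    have hK0 : 0 < K := by positivity
    obtain ⟨n, hnN, hclog⟩ := hfreq (max 2 (⌈K ^ 4⌉₊ + 1))
    have hn2 : 2 ≤ n := le_trans (le_max_left _ _) hnN
    have hnR : (2 : ℝ) ≤ (n : ℝ) := by exact_mod_cast hn2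
    have hnK : K ^ 4 < (n : ℝ) := by
      have h1 : (⌈K ^ 4⌉₊ + 1 : ℕ) ≤ n := le_trans (le_max_right _ _) hnN
      have h2 : ((⌈K ^ 4⌉₊ : ℝ) + 1) ≤ (n : ℝ) := by exact_mod_cast h1
      have h3 : K ^ 4 ≤ (⌈K ^ 4⌉₊ : ℝ) := Nat.le_ceil _
      linarith
    have hL : 0 < Real.log n := Real.log_pos (by linarith)
    set L := Real.log (n : ℝ) with hLdef
    have han : c / L ≤ a n := (div_le_iff₀ hL).mpr (by linarith)
    set B := Real.sqrt (c / L) * Real.exp (-L / 2) with hB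
    have hterm : ∀ m ∈ Finset.range n, B ≤ Sterm σ h ε (m + 1) := by
      intro m hm
      have hm1 : m + 1 ≤ n := Finset.mem_range.mp hm
      have ham : c / L ≤ a (m + 1) := le_trans han (hanti hm1)
      have hampos : 0 < a (m + 1) := lt_of_lt_of_le (by positivity) ham
      rw [Sterm, if_neg (ne_of_gt hampos)]
      apply mul_le_mul (Real.sqrt_le_sqrt ham) ?_ (Real.exp_pos _).le (Real.sqrt_nonneg _)
      apply Real.exp_le_exp.mpr
      rw [hε2]
      have hcaL : c ≤ a (m + 1) * L := (div_le_iff₀ hL).mp ham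
      rw [neg_div, neg_div, neg_le_neg_iff]
      rw [div_le_div_iff₀ (by positivity : (0:ℝ) < 2 * a (m+1)) (by norm_num : (0:ℝ) < 2)]
      nlinarith
    have hsumlb : (n : ℝ) * B ≤ T := by
      calc (n : ℝ) * B = (Finset.range n).card • B := by
            simp [nsmul_eq_mul, Finset.card_range]
        _ ≤ ∑ m ∈ Finset.range n, Sterm σ h ε (m + 1) :=
            Finset.card_nsmul_le_sum _ _ _ hterm
        _ ≤ T := Summable.sum_le_tsum _ (fun i _ => Sterm_nonneg σ h ε _) hS
    -- now derive contradiction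
    set s := Real.sqrt (n : ℝ) with hs
    set q := Real.sqrt s with hq
    have hspos : 0 < s := Real.sqrt_pos.mpr (by linarith)
    have hqpos : 0 < q := Real.sqrt_pos.mpr hspos
    have hs2 : s ^ 2 = (n : ℝ) := Real.sq_sqrt (by linarith)
    have hq2 : q ^ 2 = s := Real.sq_sqrt hspos.le
    have hexp_eq : Real.exp (-L / 2) = s⁻¹ := by
      have hlogs : Real.log s = L / 2 := Real.log_sqrt (by linarith)
      rw [show -L / 2 = -(L / 2) by ring, ← hlogs, Real.exp_neg, Real.exp_log hspos]
    have hsqrtdiv : Real.sqrt (c / L) = Real.sqrt c / Real.sqrt L :=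
      Real.sqrt_div hc.le L
    have hLle : L ≤ 2 * s := by
      have h1 : Real.log s ≤ s - 1 := Real.log_le_sub_one_of_pos hspos
      have h2 : Real.log s = L / 2 := Real.log_sqrt (by linarith)
      linarith
    have hsL : Real.sqrt L ≤ Real.sqrt 2 * q := by
      calc Real.sqrt L ≤ Real.sqrt (2 * s) := Real.sqrt_le_sqrt hLle
        _ = Real.sqrt 2 * q := by rw [Real.sqrt_mul (by norm_num) s]
    have hsLpos : 0 < Real.sqrt L := Real.sqrt_pos.mpr hL
    have hnB : (n : ℝ) * B = s * Real.sqrt c / Real.sqrt L := by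
      rw [hB, hsqrtdiv, hexp_eq, ← hs2]
      field_simp
    have hstep1 : q * Real.sqrt c / Real.sqrt 2 ≤ s * Real.sqrt c / Real.sqrt L := by
      have heq : q * Real.sqrt c / Real.sqrt 2 = s * Real.sqrt c / (Real.sqrt 2 * q) := by
        rw [← hq2]
        field_simp
      rw [heq]
      apply div_le_div_of_nonneg_left (by positivity) hsLpos hsL
    have hqK : K < q := by
      by_contra hqK'
      push_neg at hqK'
      have : (n : ℝ) ≤ K ^ 4 := by
        have hq4 : q ^ 4 = (n : ℝ) := by
          rw [show q ^ 4 = (q ^ 2) ^ 2 by ring, hq2, hs2]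
        rw [← hq4]
        exact pow_le_pow_left₀ hqpos.le hqK' 4
      linarith
    have hKeq : K * Real.sqrt c / Real.sqrt 2 = T + 1 := by
      rw [hK]
      have h2 : Real.sqrt 2 ≠ 0 := by positivity
      have hc' : Real.sqrt c ≠ 0 := by positivity
      field_simp
    have hfin : T + 1 < q * Real.sqrt c / Real.sqrt 2 := by
      rw [← hKeq]
      gcongr
    rw [hnB] at hsumlb
    linarith
end
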